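/- arXiv:1907.01815 — 6 statements merged into one kernel-verified Lean document; each statement's English description precedes it below -/
import Mathlib

section
/- If a string S of length n has periods p and q with n ≥ p + q - 1, then S has period gcd(p, q). -/
private lemma per_mul {α : Type*} (S : ℕ → α) {g m : ℕ}
    (h : ∀ i, i + g < m → S i = S (i + g)) :
    ∀ k j, j + k * g < m → S j = S (j + k * g) := by
  intro k
  induction k with
  | zero => simp
  | succ k ih =>
    intro j hj
    have hks : (k + 1) * g = k * g + g := by ring
    have h1 : j + g + k * g < m := by omega
    calc S j = S (j + g) := h j (by omega)
      _ = S (j + g + k * g) := ih (j + g) h1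
      _ = S (j + (k + 1) * g) := by rw [hks]; ring_nf

private lemma fw_key {α : Type*} : ∀ N p q n (S : ℕ → α), p + q ≤ N → q ≤ p →
    (∀ i, i + p < n → S i = S (i + p)) →
    (∀ i, i + q < n → S i = S (i + q)) →
    p + q ≤ n + 1 →
    ∀ i, i + Nat.gcd p q < n → S i = S (i + Nat.gcd p q) := by
  intro N
  induction N with
  | zero =>
    intro p q n S hN hqp hp hq hn i hi
    have hp0 : p = 0 := by omega
    have hq0 : q = 0 := by omega
    simp_all
  | succ N ih =>
    intro p q n S hN hqp hp hq hn
    rcases Nat.eq_zero_or_pos q with hq0 | hq0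
    · subst hq0
      simpa using hp
    rcases eq_or_lt_of_le hqp with hpq | hpq
    · subst hpq
      simpa [Nat.gcd_self] using hq
    -- q < p
    have hnq : q ≤ n := by omega
    have hp' : ∀ i, i + (p - q) < n - q → S i = S (i + (p - q)) := by
      intro i hi
      have hipn : i + p < n := by omega
      have h1 : S i = S (i + p) := hp i hipn
      have h2 : S (i + (p - q)) = S (i + (p - q) + q) := hq (i + (p - q)) (by omega)
      have h3 : i + (p - q) + q = i + p := by omega
      rw [h1, h2, h3]
    have hq' : ∀ i, i + q < n - q → S i = S (i + q) := fun i hi => hq i (by omega)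
    have hgeq : Nat.gcd (p - q) q = Nat.gcd p q := by
      conv_rhs => rw [show p = p - q + q by omega]
      exact (Nat.gcd_add_self_left q (p - q)).symm
    have hg : ∀ i, i + Nat.gcd p q < n - q → S i = S (i + Nat.gcd p q) := by
      rcases le_total q (p - q) with hle | hle
      · have := ih (p - q) q (n - q) S (by omega) hle hp' hq' (by omega)
        rwa [hgeq] at this
      · have := ih q (p - q) (n - q) S (by omega) hle hq' hp' (by omega)
        rwa [Nat.gcd_comm, hgeq] at this
    have hgq : Nat.gcd p q ∣ q := Nat.gcd_dvd_right p q
    have hgpos : 0 < Nat.gcd p q := Nat.gcd_pos_of_pos_right p hq0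
    have hgle : Nat.gcd p q ≤ q := Nat.le_of_dvd hq0 hgq
    intro i hi
    rcases Nat.lt_or_ge (i + Nat.gcd p q) (n - q) with him | him
    · exact hg i him
    -- i + g ≥ n - q
    have hig_q : q ≤ i + Nat.gcd p q := by omega
    have hstep : S (i + Nat.gcd p q) = S (i + Nat.gcd p q - q) := by
      have := hq (i + Nat.gcd p q - q) (by omega)
      rw [Nat.sub_add_cancel hig_q] at this
      exact this.symm
    obtain ⟨c, hc⟩ := hgq
    have hc0 : 0 < c := by
      rcases Nat.eq_zero_or_pos c with h | h
      · subst h; simp at hc; omega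
      · exact h
    rcases Nat.lt_or_ge i (n - q) with hiltm | higem
    · -- i < n - q : chain from i+g-q up to i in steps of g
      obtain ⟨c', rfl⟩ : ∃ c', c = c' + 1 := ⟨c - 1, by omega⟩
      have hcg : c' * Nat.gcd p q = q - Nat.gcd p q := by
        have hq_eq : q = c' * Nat.gcd p q + Nat.gcd p q := by
          conv_lhs => rw [hc]
          ring
        omega
      have hchain := per_mul S hg c' (i + Nat.gcd p q - q) (by omega)
      have hidx : i + Nat.gcd p q - q + c' * Nat.gcd p q = i := by omega
      rw [hidx] at hchain
      rw [hstep, ← hchain]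
    · -- i ≥ n - q
      have hstep2 : S i = S (i - q) := by
        have := hq (i - q) (by omega)
        rw [Nat.sub_add_cancel (by omega : q ≤ i)] at this
        exact this.symm
      have h3 : S (i - q) = S (i - q + Nat.gcd p q) := hg (i - q) (by omega)
      have h4 : i - q + Nat.gcd p q = i + Nat.gcd p q - q := by omega
      rw [hstep, hstep2, h3, h4]

/-- **Fine and Wilf's periodicity lemma.**
A string `S` of length `n` (modelled as a function `ℕ → α`, only indices `< n` relevant)
has period `q` if `S i = S (i + q)` for all `i` with `i + q < n`.
If `S` has periods `p` and `q` and `n ≥ p + q - 1`, then `S` has period `gcd p q`. -/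
theorem fine_and_wilf {α : Type*} {n p q : ℕ} (S : ℕ → α)
    (hp : ∀ i, i + p < n → S i = S (i + p))
    (hq : ∀ i, i + q < n → S i = S (i + q))
    (hn : p + q ≤ n + 1) :
    ∀ i, i + Nat.gcd p q < n → S i = S (i + Nat.gcd p q) := by
  rcases le_total q p with h | h
  · exact fw_key (p + q) p q n S le_rfl h hp hq hn
  · have := fw_key (q + p) q p n S le_rfl h hq hp (by omega)
    simpa [Nat.gcd_comm] using this
end

section
/- Let S and S' be equal-length strings with Hamming distance at most k, and suppose S[i..j] = S'[i..j]. Let I = Misper_{k+1}(S,i,j) and I' = Misper_{k+1}(S',i,j). If I ∩ I' = ∅, then Mis(S,S') = I ∪ I', I = Misper(S,i,j), and I' = Misper(S',i,j). -/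
/-- The unique position `b ∈ [i..j]` with `(j - i + 1) ∣ (b - a)` (as integers). -/
def alignPos (i j a : ℕ) : ℕ := i + ((((a : ℤ) - (i : ℤ)) % ((j : ℤ) - (i : ℤ) + 1)).toNat)

/-- The set of misperiods of `S` (of length `n`) with respect to the fragment `S[i..j]`:
positions `a < n` with `S a ≠ S b` for the unique `b ∈ [i..j]` with `(j-i+1) ∣ (b-a)`. -/
def Misper {α : Type*} [DecidableEq α] (S : ℕ → α) (n i j : ℕ) : Finset ℕ :=
  (Finset.range n).filter fun a => S a ≠ S (alignPos i j a)

/-- The `k` maximal misperiods smaller than `i` (fewer if fewer exist). -/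
def LeftMisper {α : Type*} [DecidableEq α] (k : ℕ) (S : ℕ → α) (n i j : ℕ) : Finset ℕ :=
  (Misper S n i j).filter fun a => a < i ∧
    ((Misper S n i j).filter fun b => a < b ∧ b < i).card < k

/-- The `k` minimal misperiods greater than `j` (fewer if fewer exist). -/
def RightMisper {α : Type*} [DecidableEq α] (k : ℕ) (S : ℕ → α) (n i j : ℕ) : Finset ℕ :=
  (Misper S n i j).filter fun a => j < a ∧
    ((Misper S n i j).filter fun b => j < b ∧ b < a).card < k

/-- `Misper_k(S,i,j) = LeftMisper_k(S,i,j) ∪ RightMisper_k(S,i,j)`. -/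
def MisperK {α : Type*} [DecidableEq α] (k : ℕ) (S : ℕ → α) (n i j : ℕ) : Finset ℕ :=
  LeftMisper k S n i j ∪ RightMisper k S n i j

lemma alignPos_bds {i j : ℕ} (hij : i ≤ j) (a : ℕ) :
    i ≤ alignPos i j a ∧ alignPos i j a ≤ j := by
  have hp : (0:ℤ) < (j:ℤ) - i + 1 := by
    have : (i:ℤ) ≤ j := by exact_mod_cast hij
    omega
  have h1 := Int.emod_nonneg ((a:ℤ) - i) (by omega : (j:ℤ) - i + 1 ≠ 0)
  have h2 := Int.emod_lt_of_pos ((a:ℤ) - i) hp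
  unfold alignPos
  omega

lemma alignPos_self {i j a : ℕ} (h1 : i ≤ a) (h2 : a ≤ j) : alignPos i j a = a := by
  have e : ((a:ℤ) - i) % ((j:ℤ) - i + 1) = (a:ℤ) - i := by
    apply Int.emod_eq_of_lt
    · have : (i:ℤ) ≤ a := by exact_mod_cast h1
      omega
    · have : (a:ℤ) ≤ j := by exact_mod_cast h2
      omega
  unfold alignPos
  rw [e]
  omega

lemma mem_Misper {α : Type*} [DecidableEq α] {S : ℕ → α} {n i j a : ℕ} :
    a ∈ Misper S n i j ↔ a < n ∧ S a ≠ S (alignPos i j a) := by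
  simp [Misper]

/-- Let `S =_k S'` be equal-length strings (length `n`) with `S[i..j] = S'[i..j]`.
Let `I = Misper_{k+1}(S,i,j)` and `I' = Misper_{k+1}(S',i,j)`. If `I ∩ I' = ∅`, then
`Mis(S,S') = I ∪ I'`, `I = Misper(S,i,j)` and `I' = Misper(S',i,j)`. -/
theorem misper_lemma {α : Type*} [DecidableEq α] {n i j k : ℕ} (S S' : ℕ → α)
    (hij : i ≤ j) (hjn : j < n)
    (hdist : ((Finset.range n).filter fun a => S a ≠ S' a).card ≤ k)
    (heq : ∀ a, i ≤ a → a ≤ j → S a = S' a)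
    (hdisj : MisperK (k+1) S n i j ∩ MisperK (k+1) S' n i j = ∅) :
    ((Finset.range n).filter fun a => S a ≠ S' a)
        = MisperK (k+1) S n i j ∪ MisperK (k+1) S' n i j ∧
      MisperK (k+1) S n i j = Misper S n i j ∧
      MisperK (k+1) S' n i j = Misper S' n i j := by
  set Mis := (Finset.range n).filter fun a => S a ≠ S' a with hMis
  -- the aligned position agrees on S and S'
  have halign : ∀ a, S (alignPos i j a) = S' (alignPos i j a) := fun a =>
    heq _ (alignPos_bds hij a).1 (alignPos_bds hij a).2
  -- a misperiod of exactly one of S, S' is a mismatch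
  have hmis1 : ∀ a, a ∈ Misper S n i j → a ∉ Misper S' n i j → a ∈ Mis := by
    intro a ha ha'
    rw [mem_Misper] at ha ha'
    simp only [hMis, Finset.mem_filter, Finset.mem_range]
    refine ⟨ha.1, ?_⟩
    push_neg at ha'
    have h2 := ha' ha.1
    have := halign a
    intro h
    exact ha.2 (by rw [h, h2, ← this])
  have hmis1' : ∀ a, a ∈ Misper S' n i j → a ∉ Misper S n i j → a ∈ Mis := by
    intro a ha ha'
    rw [mem_Misper] at ha ha'
    simp only [hMis, Finset.mem_filter, Finset.mem_range]
    refine ⟨ha.1, ?_⟩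
    push_neg at ha'
    have h2 := ha' ha.1
    have := halign a
    intro h
    exact ha.2 (by rw [← h, h2, this])
  -- a mismatch is a misperiod of S or of S'
  have hmis2 : ∀ a, a ∈ Mis → a ∈ Misper S n i j ∨ a ∈ Misper S' n i j := by
    intro a ha
    simp only [hMis, Finset.mem_filter, Finset.mem_range] at ha
    by_contra h
    push_neg at h
    obtain ⟨h1, h2⟩ := h
    rw [mem_Misper] at h1
    rw [mem_Misper] at h2
    push_neg at h1 h2
    exact ha.2 ((h1 ha.1).trans ((halign a).trans (h2 ha.1).symm))
  -- misperiods are outside [i,j]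
  have hout : ∀ (T : ℕ → α) a, a ∈ Misper T n i j → a < i ∨ j < a := by
    intro T a ha
    by_contra h
    push_neg at h
    rw [mem_Misper, alignPos_self h.1 h.2] at ha
    exact ha.2 rfl
  -- disjointness as a pointwise statement
  have hdisj' : ∀ a, a ∈ MisperK (k+1) S n i j → a ∈ MisperK (k+1) S' n i j → False := by
    intro a h1 h2
    have : a ∈ MisperK (k+1) S n i j ∩ MisperK (k+1) S' n i j := Finset.mem_inter.2 ⟨h1, h2⟩
    rw [hdisj] at this
    exact absurd this (Finset.notMem_empty a)
  -- KEY CLAIM (left): no common misperiod below i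
  have keyL : ∀ a, a < i → a ∈ Misper S n i j → a ∈ Misper S' n i j → False := by
    intro a hai haS haS'
    set T := (Misper S n i j).filter fun b => b ∈ Misper S' n i j ∧ b < i with hT
    have hne : T.Nonempty := ⟨a, by simp [hT, haS, haS', hai]⟩
    set x := T.max' hne with hx
    have hxT : x ∈ T := T.max'_mem hne
    simp only [hT, Finset.mem_filter] at hxT
    obtain ⟨hxS, hxS', hxi⟩ := hxT
    -- x can't be in both LeftMispers
    have : x ∉ LeftMisper (k+1) S n i j ∨ x ∉ LeftMisper (k+1) S' n i j := by
      by_contra h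
      push_neg at h
      exact hdisj' x (Finset.mem_union_left _ h.1) (Finset.mem_union_left _ h.2)
    rcases this with h | h
    · -- ≥ k+1 misperiods of S in (x,i), all mismatches
      simp only [LeftMisper, Finset.mem_filter, not_and, not_lt] at h
      have hcard : k + 1 ≤ ((Misper S n i j).filter fun b => x < b ∧ b < i).card :=
        h hxS hxi
      have hsub : ((Misper S n i j).filter fun b => x < b ∧ b < i) ⊆ Mis := by
        intro b hb
        simp only [Finset.mem_filter] at hb
        refine hmis1 b hb.1 ?_
        intro hbS'
        have : b ∈ T := by simp [hT, hb.1, hbS', hb.2.2]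
        exact absurd (T.le_max' b this) (by omega)
      have := (Finset.card_le_card hsub).trans hdist
      omega
    · simp only [LeftMisper, Finset.mem_filter, not_and, not_lt] at h
      have hcard : k + 1 ≤ ((Misper S' n i j).filter fun b => x < b ∧ b < i).card :=
        h hxS' hxi
      have hsub : ((Misper S' n i j).filter fun b => x < b ∧ b < i) ⊆ Mis := by
        intro b hb
        simp only [Finset.mem_filter] at hb
        refine hmis1' b hb.1 ?_
        intro hbS
        have : b ∈ T := by simp [hT, hbS, hb.1, hb.2.2]
        exact absurd (T.le_max' b this) (by omega)
      have := (Finset.card_le_card hsub).trans hdist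
      omega
  -- KEY CLAIM (right): no common misperiod above j
  have keyR : ∀ a, j < a → a ∈ Misper S n i j → a ∈ Misper S' n i j → False := by
    intro a hai haS haS'
    set T := (Misper S n i j).filter fun b => b ∈ Misper S' n i j ∧ j < b with hT
    have hne : T.Nonempty := ⟨a, by simp [hT, haS, haS', hai]⟩
    set x := T.min' hne with hx
    have hxT : x ∈ T := T.min'_mem hne
    simp only [hT, Finset.mem_filter] at hxT
    obtain ⟨hxS, hxS', hxi⟩ := hxT
    have : x ∉ RightMisper (k+1) S n i j ∨ x ∉ RightMisper (k+1) S' n i j := by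
      by_contra h
      push_neg at h
      exact hdisj' x (Finset.mem_union_right _ h.1) (Finset.mem_union_right _ h.2)
    rcases this with h | h
    · simp only [RightMisper, Finset.mem_filter, not_and, not_lt] at h
      have hcard : k + 1 ≤ ((Misper S n i j).filter fun b => j < b ∧ b < x).card :=
        h hxS hxi
      have hsub : ((Misper S n i j).filter fun b => j < b ∧ b < x) ⊆ Mis := by
        intro b hb
        simp only [Finset.mem_filter] at hb
        refine hmis1 b hb.1 ?_
        intro hbS'
        have : b ∈ T := by simp [hT, hb.1, hbS', hb.2.1]
        exact absurd (T.min'_le b this) (by omega)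
      have := (Finset.card_le_card hsub).trans hdist
      omega
    · simp only [RightMisper, Finset.mem_filter, not_and, not_lt] at h
      have hcard : k + 1 ≤ ((Misper S' n i j).filter fun b => j < b ∧ b < x).card :=
        h hxS' hxi
      have hsub : ((Misper S' n i j).filter fun b => j < b ∧ b < x) ⊆ Mis := by
        intro b hb
        simp only [Finset.mem_filter] at hb
        refine hmis1' b hb.1 ?_
        intro hbS
        have : b ∈ T := by simp [hT, hbS, hb.1, hb.2.1]
        exact absurd (T.min'_le b this) (by omega)
      have := (Finset.card_le_card hsub).trans hdist
      omega
  -- no common misperiods at all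
  have hkey : ∀ a, a ∈ Misper S n i j → a ∉ Misper S' n i j := by
    intro a haS haS'
    rcases hout S a haS with h | h
    · exact keyL a h haS haS'
    · exact keyR a h haS haS'
  -- so every misperiod of S or S' is a mismatch
  have hMsub : Misper S n i j ⊆ Mis := fun a ha => hmis1 a ha (hkey a ha)
  have hMsub' : Misper S' n i j ⊆ Mis := fun a ha => hmis1' a ha (fun h => hkey a h ha)
  have hcS : (Misper S n i j).card ≤ k := (Finset.card_le_card hMsub).trans hdist
  have hcS' : (Misper S' n i j).card ≤ k := (Finset.card_le_card hMsub').trans hdist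
  -- MisperK (k+1) = Misper for both strings
  have hfull : ∀ (T : ℕ → α), (Misper T n i j).card ≤ k →
      MisperK (k+1) T n i j = Misper T n i j := by
    intro T hc
    apply Finset.Subset.antisymm
    · intro a ha
      rcases Finset.mem_union.1 ha with h | h
      · exact (Finset.mem_filter.1 h).1
      · exact (Finset.mem_filter.1 h).1
    · intro a ha
      rcases hout T a ha with h | h
      · apply Finset.mem_union_left
        simp only [LeftMisper, Finset.mem_filter]
        refine ⟨ha, h, ?_⟩
        have := Finset.card_filter_le (Misper T n i j) fun b => a < b ∧ b < i
        omega
      · apply Finset.mem_union_right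
        simp only [RightMisper, Finset.mem_filter]
        refine ⟨ha, h, ?_⟩
        have := Finset.card_filter_le (Misper T n i j) fun b => j < b ∧ b < a
        omega
  have e1 := hfull S hcS
  have e2 := hfull S' hcS'
  refine ⟨?_, e1, e2⟩
  rw [e1, e2]
  apply Finset.Subset.antisymm
  · intro a ha
    exact Finset.mem_union.2 (hmis2 a ha)
  · intro a ha
    rcases Finset.mem_union.1 ha with h | h
    · exact hMsub h
    · exact hMsub' h
end

section
/- Let I be a finite set of at most c positions in [0..n-1] and define g(x) = |I ∩ [x, x+m-1]| for x ∈ [0..n-m]. Then the set { x ∈ [0..n-m] : g(x) ≤ k } is a union of at most 2c+1 (possibly empty) intervals of integers. -/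
/-- run start existence -/
lemma run_start (S : Finset ℕ) : ∀ x ∈ S, ∃ s, s ≤ x ∧ Finset.Icc s x ⊆ S ∧ (s = 0 ∨ s - 1 ∉ S) := by
  intro x
  induction x using Nat.strong_induction_on with
  | _ x ih =>
    intro hx
    by_cases h0 : x = 0 ∨ x - 1 ∉ S
    · exact ⟨x, le_rfl, by simp [Finset.Icc_self, hx], h0⟩
    · push_neg at h0
      obtain ⟨hx0, hx1⟩ := h0
      obtain ⟨s, hs1, hs2, hs3⟩ := ih (x - 1) (by omega) hx1
      refine ⟨s, by omega, ?_, hs3⟩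
      intro y hy
      simp only [Finset.mem_Icc] at hy
      rcases eq_or_lt_of_le hy.2 with h | h
      · exact h ▸ hx
      · exact hs2 (Finset.mem_Icc.mpr ⟨hy.1, by omega⟩)

lemma intervals_of_starts (S T : Finset ℕ) (N : ℕ) (h0 : 0 ∈ T)
    (hT : ∀ x ∈ S, (x = 0 ∨ x - 1 ∉ S) → x ∈ T) (hcard : T.card ≤ N) :
    ∃ a b : Fin N → ℕ, S = Finset.univ.biUnion (fun t => Finset.Icc (a t) (b t)) := by
  classical
  set M := S.sup id with hM
  have hmem_le : ∀ x ∈ S, x ≤ M := fun x hx => Finset.le_sup (f := id) hx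
  set e : ℕ → ℕ := fun t => Nat.findGreatest (fun z => Finset.Icc t z ⊆ S) M with he
  set l := T.toList with hl
  set F : Fin N → ℕ := fun i => l.getD i 0 with hF
  have hFT : ∀ i, F i ∈ T := by
    intro i
    by_cases h : (i : ℕ) < l.length
    · rw [hF]
      simp only
      rw [List.getD_eq_getElem l 0 h]
      exact Finset.mem_toList.mp (List.getElem_mem h)
    · simp only [hF, List.getD_eq_default _ _ (le_of_not_gt h)]
      exact h0
  refine ⟨fun i => if F i ∈ S then F i else 1, fun i => if F i ∈ S then e (F i) else 0, ?_⟩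
  ext x
  simp only [Finset.mem_biUnion, Finset.mem_univ, true_and]
  constructor
  · intro hx
    obtain ⟨s, hsx, hss, hstart⟩ := run_start S x hx
    have hsS : s ∈ S := hss (Finset.mem_Icc.mpr ⟨le_rfl, hsx⟩)
    have hsT : s ∈ T := hT s hsS hstart
    have hmem : s ∈ l := Finset.mem_toList.mpr hsT
    have hidx : l.idxOf s < l.length := List.idxOf_lt_length_iff.mpr hmem
    have hlen : l.length = T.card := Finset.length_toList T
    refine ⟨⟨l.idxOf s, by omega⟩, ?_⟩
    have hFi : F ⟨l.idxOf s, by omega⟩ = s := by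
      simp only [hF]
      rw [List.getD_eq_getElem l 0 hidx]
      exact List.getElem_idxOf _
    rw [hFi, if_pos hsS, if_pos hsS]
    refine Finset.mem_Icc.mpr ⟨hsx, ?_⟩
    exact Nat.le_findGreatest (hmem_le x hx) hss
  · rintro ⟨i, hi⟩
    by_cases hs : F i ∈ S
    · rw [if_pos hs, if_pos hs] at hi
      set t := F i
      rw [Finset.mem_Icc] at hi
      have hPe : Finset.Icc t (e t) ⊆ S :=
        Nat.findGreatest_spec (P := fun z => Finset.Icc t z ⊆ S) (m := t) (hmem_le t hs)
          (by simp only [Finset.Icc_self, Finset.singleton_subset_iff]; exact hs)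
      exact hPe (Finset.mem_Icc.mpr hi)
    · rw [if_neg hs, if_neg hs] at hi
      simp at hi

/-- Let `I` be a set of at most `c` positions in `[0..n-1]` and, for `x ∈ [0..n-m]`, let
`g x = |I ∩ [x, x+m-1]|`. Then `{ x ∈ [0..n-m] : g x ≤ k }` is a union of at most `2c+1`
(possibly empty) integer intervals. -/
theorem light_fragments_intervals (I : Finset ℕ) (n m k c : ℕ)
    (hI : ∀ i ∈ I, i < n) (hc : I.card ≤ c) (hm : 0 < m) (hmn : m ≤ n) :
    ∃ a b : Fin (2*c+1) → ℕ,
      (Finset.range (n - m + 1)).filter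
          (fun x => (I.filter (fun i => x ≤ i ∧ i ≤ x + m - 1)).card ≤ k) =
        Finset.univ.biUnion (fun t => Finset.Icc (a t) (b t)) := by
  classical
  set S := (Finset.range (n - m + 1)).filter
      (fun x => (I.filter (fun i => x ≤ i ∧ i ≤ x + m - 1)).card ≤ k) with hS
  set T := insert 0 (I.image (· + 1)) with hT
  apply intervals_of_starts S T (2*c+1) (Finset.mem_insert_self 0 _)
  · intro x hx hstart
    rcases hstart with h | h
    · exact h ▸ Finset.mem_insert_self 0 _
    · -- x - 1 ∉ S, x ∈ S; show x ∈ T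
      by_cases hx0 : x = 0
      · exact hx0 ▸ Finset.mem_insert_self 0 _
      have hx' := hx
      rw [hS, Finset.mem_filter, Finset.mem_range] at hx'
      obtain ⟨hxr, hxk⟩ := hx'
      -- claim x - 1 ∈ I
      have hxI : x - 1 ∈ I := by
        by_contra hni
        apply h
        rw [hS, Finset.mem_filter, Finset.mem_range]
        refine ⟨by omega, ?_⟩
        refine le_trans (Finset.card_le_card ?_) hxk
        intro i hi
        rw [Finset.mem_filter] at hi ⊢
        obtain ⟨hiI, h1, h2⟩ := hi
        have : i ≠ x - 1 := fun hh => hni (hh ▸ hiI)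
        exact ⟨hiI, by omega, by omega⟩
      rw [hT]
      refine Finset.mem_insert_of_mem (Finset.mem_image.mpr ⟨x - 1, hxI, by omega⟩)
  · have h1 : T.card ≤ (I.image (· + 1)).card + 1 := Finset.card_insert_le _ _
    have h2 : (I.image (· + 1)).card ≤ I.card := Finset.card_image_le
    omega
end

section
/- Let X and Z be intervals of integers and q a positive integer. Then the set Z' = { z ∈ Z : ∃ x ∈ X, z ≡ x (mod q) } is a disjoint union of at most three interval chains with difference q. In particular, if |X| ≥ q then Z' = Z. -/
set_option maxHeartbeats 1000000
/-- The interval chain `Chain_q(I,a) = I ∪ (I⊕q) ∪ ⋯ ∪ (I⊕aq)` for the integer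
interval `I = [l..r]`. -/
noncomputable def chainZ (q l r : ℤ) (a : ℕ) : Finset ℤ :=
  (Finset.range (a+1)).biUnion fun t => Finset.Icc (l + t*q) (r + t*q)

lemma mem_chainZ {q l r z : ℤ} {a : ℕ} :
    z ∈ chainZ q l r a ↔ ∃ t : ℕ, t ≤ a ∧ (l + t*q ≤ z ∧ z ≤ r + t*q) := by
  simp [chainZ, Nat.lt_succ_iff]

/-- Let `X = [x1..x2]` and `Z = [z1..z2]` be integer intervals and `q > 0`. Then
`Z' = { z ∈ Z : ∃ x ∈ X, z ≡ x (mod q) }` is a disjoint union of at most three interval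
chains with difference `q`. In particular, if `|X| ≥ q` then `Z' = Z`. -/
theorem three_chains (q : ℤ) (hq : 0 < q) (z1 z2 x1 x2 : ℤ) :
    (∃ l r : Fin 3 → ℤ, ∃ a : Fin 3 → ℕ,
      (∀ s t : Fin 3, s ≠ t →
        Disjoint (chainZ q (l s) (r s) (a s)) (chainZ q (l t) (r t) (a t))) ∧
      (Finset.Icc z1 z2).filter (fun z => ∃ x ∈ Finset.Icc x1 x2, z % q = x % q) =
        Finset.univ.biUnion (fun t => chainZ q (l t) (r t) (a t))) ∧
    (q ≤ ((Finset.Icc x1 x2).card : ℤ) →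
      (Finset.Icc z1 z2).filter (fun z => ∃ x ∈ Finset.Icc x1 x2, z % q = x % q) =
        Finset.Icc z1 z2) := by
  -- membership in the filtered set
  have hmemF : ∀ z : ℤ,
      (z ∈ (Finset.Icc z1 z2).filter (fun z => ∃ x ∈ Finset.Icc x1 x2, z % q = x % q)) ↔
      (z1 ≤ z ∧ z ≤ z2 ∧ ∃ k : ℤ, x1 + q*k ≤ z ∧ z ≤ x2 + q*k) := by
    intro z
    simp only [Finset.mem_filter, Finset.mem_Icc]
    constructor
    · rintro ⟨⟨h1, h2⟩, x, ⟨hx1, hx2⟩, hmod⟩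
      refine ⟨h1, h2, ?_⟩
      have hdvd : q ∣ z - x := by
        rw [Int.dvd_iff_emod_eq_zero, Int.sub_emod, hmod, sub_self, Int.zero_emod]
      obtain ⟨k, hk⟩ := hdvd
      exact ⟨k, by omega, by omega⟩
    · rintro ⟨h1, h2, k, hk1, hk2⟩
      refine ⟨⟨h1, h2⟩, z - q*k, ⟨by omega, by omega⟩, ?_⟩
      rw [Int.sub_emod, Int.mul_emod_right, sub_zero, Int.emod_emod_of_dvd _ dvd_rfl]
  -- part 2
  have hfull : q ≤ ((Finset.Icc x1 x2).card : ℤ) →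
      (Finset.Icc z1 z2).filter (fun z => ∃ x ∈ Finset.Icc x1 x2, z % q = x % q) =
        Finset.Icc z1 z2 := by
    intro hcard
    rw [Int.card_Icc] at hcard
    have hx : q ≤ x2 - x1 + 1 := by omega
    apply Finset.filter_true_of_mem
    intro z hz
    refine ⟨x1 + (z - x1) % q, ?_, ?_⟩
    · rw [Finset.mem_Icc]
      have h1 := Int.emod_nonneg (z - x1) hq.ne'
      have h2 := Int.emod_lt_of_pos (z - x1) hq
      omega
    · conv_rhs => rw [Int.add_emod, Int.emod_emod_of_dvd _ dvd_rfl, ← Int.add_emod]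
      ring_nf
  refine ⟨?_, hfull⟩
  by_cases hbig : q ≤ x2 - x1 + 1
  · -- the filtered set is all of Z
    have hcard : q ≤ ((Finset.Icc x1 x2).card : ℤ) := by
      rw [Int.card_Icc]; omega
    refine ⟨![z1, 0, 0], ![z2, -1, -1], ![0, 0, 0], ?_, ?_⟩
    · have hempty : ∀ a : ℕ, chainZ q 0 (-1) a = ∅ := by
        intro a
        rw [Finset.eq_empty_iff_forall_notMem]
        intro z hz
        rw [mem_chainZ] at hz
        obtain ⟨t, -, h1, h2⟩ := hz
        omega
      intro s t hst
      fin_cases s <;> fin_cases t <;> simp_all [hempty]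
    · rw [hfull hcard]
      ext z
      simp only [Finset.mem_biUnion, Finset.mem_univ, true_and]
      constructor
      · intro hz
        rw [Finset.mem_Icc] at hz
        exact ⟨0, mem_chainZ.mpr ⟨0, le_refl _, by push_cast; simpa using hz⟩⟩
      · rintro ⟨i, hi⟩
        rw [Finset.mem_Icc]
        fin_cases i <;>
          obtain ⟨t, ht, h1, h2⟩ := mem_chainZ.mp hi <;>
          obtain rfl : t = 0 := Nat.le_zero.mp ht <;>
          simp only [Nat.cast_zero, zero_mul, add_zero] at h1 h2
        · exact ⟨h1, h2⟩
        · exact absurd (show (0:ℤ) ≤ -1 from le_trans h1 h2) (by norm_num)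
        · exact absurd (show (0:ℤ) ≤ -1 from le_trans h1 h2) (by norm_num)
  · push_neg at hbig
    have hsmall : x2 - x1 + 1 < q := hbig
    set A : ℤ := -((x2 - z1) / q) with hAdef
    set B : ℤ := (z2 - x1) / q with hBdef
    have hA0 := Int.mul_ediv_add_emod (x2 - z1) q
    have hA1 := Int.emod_nonneg (x2 - z1) hq.ne'
    have hA2 := Int.emod_lt_of_pos (x2 - z1) hq
    have hB0 := Int.mul_ediv_add_emod (z2 - x1) q
    have hB1 := Int.emod_nonneg (z2 - x1) hq.ne'
    have hB2 := Int.emod_lt_of_pos (z2 - x1) hq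
    have hqAeq : q*A = -(q*((x2 - z1)/q)) := by rw [hAdef]; ring
    have hqBeq : q*B = q*((z2 - x1)/q) := by rw [hBdef]
    have hAl : z1 - x2 ≤ q*A := by omega
    have hAu : q*A < z1 - x2 + q := by omega
    have hBl : q*B ≤ z2 - x1 := by omega
    have hBu : z2 - x1 < q*B + q := by omega
    -- monotonicity of multiplication by q
    have hmono : ∀ u v : ℤ, u ≤ v → q*u ≤ q*v := fun u v huv =>
      mul_le_mul_of_nonneg_left huv hq.le
    -- uniqueness of the translate containing a point
    have key : ∀ z k k' : ℤ, x1 + q*k ≤ z → z ≤ x2 + q*k → x1 + q*k' ≤ z →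
        z ≤ x2 + q*k' → k = k' := by
      intro z k k' h1 h2 h3 h4
      by_contra hne
      rcases lt_or_gt_of_ne hne with h | h
      · have := hmono (k+1) k' (by omega); rw [mul_add, mul_one] at this; omega
      · have := hmono (k'+1) k (by omega); rw [mul_add, mul_one] at this; omega
    -- membership facts for each chain
    have hc0 : ∀ z, z ∈ chainZ q (max z1 (x1 + q*A)) (min z2 (x2 + q*A)) 0 →
        (z1 ≤ z ∧ z ≤ z2) ∧ (x1 + q*A ≤ z ∧ z ≤ x2 + q*A) := by
      intro z hz
      rw [mem_chainZ] at hz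
      obtain ⟨t, ht, h1, h2⟩ := hz
      interval_cases t
      simp only [Nat.cast_zero, zero_mul, add_zero] at h1 h2
      exact ⟨⟨by omega, by omega⟩, by omega, by omega⟩
    have hc1 : ∀ z, z ∈ chainZ q (if A+1 < B then x1 + q*(A+1) else 0)
        (if A+1 < B then x2 + q*(A+1) else -1)
        (if A+1 < B then (B-A-2).toNat else 0) →
        ∃ k, A + 1 ≤ k ∧ k ≤ B - 1 ∧ x1 + q*k ≤ z ∧ z ≤ x2 + q*k := by
      intro z hz
      rw [mem_chainZ] at hz
      obtain ⟨t, ht, h1, h2⟩ := hz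
      by_cases hAB : A + 1 < B
      · rw [if_pos hAB] at h1 h2 ht
        refine ⟨A + 1 + t, by omega, ?_, by linarith [h1, mul_add q (A+1) (t:ℤ), mul_comm (t:ℤ) q], ?_⟩
        · have : (t:ℤ) ≤ B - A - 2 := by
            have := Int.toNat_of_nonneg (show (0:ℤ) ≤ B - A - 2 by omega)
            exact_mod_cast le_trans (Nat.cast_le.mpr ht) (le_of_eq this)
          omega
        · have : q*(A+1+t) = q*(A+1) + (t:ℤ)*q := by ring
          rw [this]; linarith [h2]
      · rw [if_neg hAB] at h1 h2
        omega
    have hc2 : ∀ z, z ∈ chainZ q (if A < B then x1 + q*B else 0)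
        (if A < B then min z2 (x2 + q*B) else -1) 0 →
        A < B ∧ x1 + q*B ≤ z ∧ z ≤ x2 + q*B ∧ z ≤ z2 := by
      intro z hz
      rw [mem_chainZ] at hz
      obtain ⟨t, ht, h1, h2⟩ := hz
      interval_cases t
      simp only [Nat.cast_zero, zero_mul, add_zero] at h1 h2
      by_cases hAB : A < B
      · rw [if_pos hAB] at h1 h2; exact ⟨hAB, h1, by omega, by omega⟩
      · rw [if_neg hAB] at h1 h2; omega
    refine ⟨![max z1 (x1 + q*A), if A+1 < B then x1 + q*(A+1) else 0,
              if A < B then x1 + q*B else 0],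
            ![min z2 (x2 + q*A), if A+1 < B then x2 + q*(A+1) else -1,
              if A < B then min z2 (x2 + q*B) else -1],
            ![0, if A+1 < B then (B-A-2).toNat else 0, 0], ?_, ?_⟩
    · -- disjointness
      have D01 : Disjoint
          (chainZ q (max z1 (x1 + q*A)) (min z2 (x2 + q*A)) 0)
          (chainZ q (if A+1 < B then x1 + q*(A+1) else 0)
            (if A+1 < B then x2 + q*(A+1) else -1)
            (if A+1 < B then (B-A-2).toNat else 0)) := by
        rw [Finset.disjoint_left]
        intro z h0 h1
        obtain ⟨-, ha1, ha2⟩ := hc0 z h0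
        obtain ⟨k, hk1, hk2, hk3, hk4⟩ := hc1 z h1
        have := key z A k ha1 ha2 hk3 hk4
        omega
      have D02 : Disjoint
          (chainZ q (max z1 (x1 + q*A)) (min z2 (x2 + q*A)) 0)
          (chainZ q (if A < B then x1 + q*B else 0)
            (if A < B then min z2 (x2 + q*B) else -1) 0) := by
        rw [Finset.disjoint_left]
        intro z h0 h2
        obtain ⟨-, ha1, ha2⟩ := hc0 z h0
        obtain ⟨hAB, hb1, hb2, -⟩ := hc2 z h2
        have := key z A B ha1 ha2 hb1 hb2
        omega
      have D12 : Disjoint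
          (chainZ q (if A+1 < B then x1 + q*(A+1) else 0)
            (if A+1 < B then x2 + q*(A+1) else -1)
            (if A+1 < B then (B-A-2).toNat else 0))
          (chainZ q (if A < B then x1 + q*B else 0)
            (if A < B then min z2 (x2 + q*B) else -1) 0) := by
        rw [Finset.disjoint_left]
        intro z h1 h2
        obtain ⟨k, hk1, hk2, hk3, hk4⟩ := hc1 z h1
        obtain ⟨hAB, hb1, hb2, -⟩ := hc2 z h2
        have := key z k B hk3 hk4 hb1 hb2
        omega
      intro s t hst
      fin_cases s <;> fin_cases t
      · exact absurd rfl hst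
      · exact D01
      · exact D02
      · exact D01.symm
      · exact absurd rfl hst
      · exact D12
      · exact D02.symm
      · exact D12.symm
      · exact absurd rfl hst
    · -- union equality
      ext z
      rw [hmemF z]
      simp only [Finset.mem_biUnion, Finset.mem_univ, true_and]
      constructor
      · rintro ⟨h1, h2, k, hk1, hk2⟩
        have hkA : A ≤ k := by
          by_contra h
          have := hmono (k+1) A (by omega)
          rw [mul_add, mul_one] at this
          omega
        have hkB : k ≤ B := by
          by_contra h
          have := hmono (B+1) k (by omega)
          rw [mul_add, mul_one] at this
          omega
        by_cases hkA' : k = A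
        · subst hkA'
          refine ⟨0, mem_chainZ.mpr ⟨0, le_refl _, ?_, ?_⟩⟩ <;>
            simp only [Matrix.cons_val_zero, Nat.cast_zero, zero_mul, add_zero] <;> omega
        · by_cases hkB' : k = B
          · subst hkB'
            have hAB : A < B := by omega
            refine ⟨2, mem_chainZ.mpr ⟨0, le_refl _, ?_, ?_⟩⟩ <;>
              simp only [Matrix.cons_val_two, Matrix.tail_cons, Matrix.head_cons,
                if_pos hAB, Nat.cast_zero, zero_mul, add_zero] <;> omega
          · have hAB : A + 1 < B := by omega
            refine ⟨1, mem_chainZ.mpr ⟨(k - A - 1).toNat, ?_, ?_, ?_⟩⟩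
            · simp only [Matrix.cons_val_one, Matrix.head_cons, if_pos hAB]
              exact Int.toNat_le_toNat (by omega)
            · simp only [Matrix.cons_val_one, Matrix.head_cons, Matrix.cons_val_zero, if_pos hAB]
              rw [Int.toNat_of_nonneg (by omega : (0:ℤ) ≤ k - A - 1)]
              have : q*(A+1) + (k-A-1)*q = q*k := by ring
              omega
            · simp only [Matrix.cons_val_one, Matrix.head_cons, Matrix.cons_val_zero, if_pos hAB]
              rw [Int.toNat_of_nonneg (by omega : (0:ℤ) ≤ k - A - 1)]
              have : q*(A+1) + (k-A-1)*q = q*k := by ring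
              omega
      · rintro ⟨i, hi⟩
        fin_cases i
        · obtain ⟨⟨hz1, hz2⟩, hb1, hb2⟩ := hc0 z hi
          exact ⟨hz1, hz2, A, hb1, hb2⟩
        · obtain ⟨k, hk1, hk2, hk3, hk4⟩ := hc1 z hi
          refine ⟨?_, ?_, k, hk3, hk4⟩
          · have h1 : q*(A+1) ≤ q*k := hmono _ _ (by omega)
            rw [mul_add, mul_one] at h1
            omega
          · have h2 : q*k ≤ q*(B-1) := hmono _ _ (by omega)
            have h3 : q*(B-1) = q*B - q := by ring
            omega
        · obtain ⟨hAB, hb1, hb2, hz2'⟩ := hc2 z hi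
          have h1 : q*(A+1) ≤ q*B := hmono _ _ (by omega)
          rw [mul_add, mul_one] at h1
          exact ⟨by omega, hz2', B, hb1, hb2⟩
end

section
/- If a string F occurs in a string G at three or more positions and |G| ≤ 2|F|, then all occurrences of F in G form an arithmetic progression whose common difference equals the smallest period of F. -/
section auxLemmas
variable {α : Type*}

lemma chain_mul (F : ℕ → α) (f p : ℕ)
    (hp : ∀ d, d + p < f → F d = F (d + p)) :
    ∀ k a, a + k * p < f → F a = F (a + k * p) := by
  intro k
  induction k with
  | zero => simp
  | succ n ih =>
    intro a ha
    have hle : n * p ≤ (n+1) * p := Nat.mul_le_mul_right _ (Nat.le_succ n)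
    have hsm : (n+1) * p = n * p + p := by ring
    have h1 : a + n * p < f := by omega
    have h2 := hp (a + n * p) (by omega)
    rw [ih a h1, h2]
    congr 1
    omega

lemma chain_dvd (F : ℕ → α) (f p : ℕ)
    (hp : ∀ d, d + p < f → F d = F (d + p))
    (a b : ℕ) (hab : a ≤ b) (hb : b < f) (hd : p ∣ (b - a)) : F a = F b := by
  obtain ⟨k, hk⟩ := hd
  have hcom : p * k = k * p := Nat.mul_comm p k
  have hb' : b = a + k * p := by omega
  rw [hb']
  exact chain_mul F f p hp k a (by omega)

lemma fw_step (H : ℕ → α) (N a b : ℕ) (hab : a ≤ b) (hN : a + b ≤ N)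
    (ha : ∀ x, x + a < N → H x = H (x + a))
    (hb : ∀ x, x + b < N → H x = H (x + b)) :
    ∀ x, x + (b - a) < N → H x = H (x + (b - a)) := by
  intro x hx
  rcases Nat.eq_or_lt_of_le hab with heq | hlt
  · subst heq
    simp
  rcases le_or_gt a x with hax | hxa
  · have e2 : H (x - a) = H ((x - a) + a) := ha _ (by omega)
    have e1 : H (x - a) = H ((x - a) + b) := hb _ (by omega)
    have c1 : (x - a) + a = x := by omega
    have c2 : (x - a) + b = x + (b - a) := by omega
    rw [c1] at e2
    rw [c2] at e1
    rw [← e2, e1]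
  · have e1 : H x = H (x + b) := hb _ (by omega)
    have e2 : H (x + (b - a)) = H ((x + (b - a)) + a) := ha _ (by omega)
    have c2 : (x + (b - a)) + a = x + b := by omega
    rw [c2] at e2
    rw [e1, e2]

lemma fw_gcd (H : ℕ → α) (N : ℕ) :
    ∀ s a b, a + b ≤ s → a + b ≤ N →
      (∀ x, x + a < N → H x = H (x + a)) →
      (∀ x, x + b < N → H x = H (x + b)) →
      ∀ x, x + Nat.gcd a b < N → H x = H (x + Nat.gcd a b) := by
  intro s
  induction s using Nat.strong_induction_on with
  | _ s ih =>
    intro a b hs hN ha hb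
    rcases Nat.eq_zero_or_pos a with ha0 | hapos
    · subst ha0; simpa [Nat.gcd_zero_left] using hb
    rcases Nat.eq_zero_or_pos b with hb0 | hbpos
    · subst hb0; simpa [Nat.gcd_zero_right] using ha
    rcases le_or_gt a b with hab | hba
    · have hsub := fw_step H N a b hab hN ha hb
      have hrec := ih b (by omega) a (b - a) (by omega) (by omega) ha hsub
      have hg : Nat.gcd a (b - a) = Nat.gcd a b := Nat.gcd_sub_self_right hab
      rw [← hg]; exact hrec
    · have hsub := fw_step H N b a (le_of_lt hba) (by omega) hb ha
      have hrec := ih a (by omega) b (a - b) (by omega) (by omega) hb hsub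
      have hg : Nat.gcd b (a - b) = Nat.gcd a b := by
        rw [Nat.gcd_sub_self_right (le_of_lt hba), Nat.gcd_comm]
      rw [← hg]; exact hrec

end auxLemmas

/-- The set of starting positions of exact occurrences of `F` (length `f`) in `G`
(length `g`). -/
def occSet {α : Type*} [DecidableEq α] (G F : ℕ → α) (g f : ℕ) : Finset ℕ :=
  (Finset.range (g+1)).filter (fun i => i + f ≤ g ∧ ∀ d < f, G (i + d) = F d)

/-- If a string `F` occurs in a string `G` at three or more positions and `|G| ≤ 2|F|`,
then all occurrences of `F` in `G` form an arithmetic progression whose common difference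
equals the smallest period of `F`. -/
theorem three_occurrences_progression {α : Type*} [DecidableEq α]
    (G F : ℕ → α) (g f : ℕ) (hgf : g ≤ 2*f)
    (hocc : 3 ≤ (occSet G F g f).card) :
    ∃ p, (0 < p ∧ (∀ d, d + p < f → F d = F (d + p)) ∧
        ∀ p', 0 < p' → (∀ d, d + p' < f → F d = F (d + p')) → p ≤ p') ∧
      ∃ s, occSet G F g f =
        (Finset.range (occSet G F g f).card).image (fun t => s + t * p) := by
  classical
  have hcard_le : (occSet G F g f).card ≤ g + 1 := by
    have h := Finset.card_filter_le (Finset.range (g+1))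
      (fun i => i + f ≤ g ∧ ∀ d < f, G (i + d) = F d)
    simpa [occSet] using h
  set S := occSet G F g f with hSdef
  have hmem : ∀ j, j ∈ S ↔ j + f ≤ g ∧ ∀ d < f, G (j + d) = F d := by
    intro j
    simp only [hSdef, occSet, Finset.mem_filter, Finset.mem_range]
    constructor
    · rintro ⟨_, h⟩; exact h
    · rintro ⟨h1, h2⟩; exact ⟨by omega, h1, h2⟩
  have hf : 0 < f := by omega
  have hSne : S.Nonempty := Finset.card_pos.mp (by omega)
  set i1 := S.min' hSne with hi1def
  set L := S.max' hSne with hLdef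
  have hi1S : i1 ∈ S := S.min'_mem hSne
  have hLS : L ∈ S := S.max'_mem hSne
  have hi1L : i1 < L := Finset.min'_lt_max'_of_card S (by omega)
  -- middle occurrence
  have hLe : L ∈ S.erase i1 := Finset.mem_erase.mpr ⟨by omega, hLS⟩
  have hmid : ((S.erase i1).erase L).Nonempty := by
    rw [← Finset.card_pos, Finset.card_erase_of_mem hLe, Finset.card_erase_of_mem hi1S]
    omega
  obtain ⟨m, hm⟩ := hmid
  rw [Finset.mem_erase, Finset.mem_erase] at hm
  obtain ⟨hmneL, hmne1, hmS⟩ := hm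
  have hi1m : i1 < m := lt_of_le_of_ne (S.min'_le m hmS) (Ne.symm hmne1)
  have hmL : m < L := lt_of_le_of_ne (S.le_max' m hmS) hmneL
  obtain ⟨hi1g, occi1⟩ := (hmem i1).mp hi1S
  obtain ⟨hLg, occL⟩ := (hmem L).mp hLS
  have hLf : L ≤ f := by omega
  have hQf : L - i1 ≤ f := by omega
  -- periods of F from pairs of occurrences
  have pairP : ∀ i ∈ S, ∀ j ∈ S, i ≤ j →
      ∀ d, d + (j - i) < f → F d = F (d + (j - i)) := by
    intro i hi j hj hij d hd
    obtain ⟨hig, hiocc⟩ := (hmem i).mp hi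
    obtain ⟨hjg, hjocc⟩ := (hmem j).mp hj
    have h1 : G (i + (d + (j - i))) = F (d + (j - i)) := hiocc _ hd
    have h2 : G (j + d) = F d := hjocc d (by omega)
    have h3 : i + (d + (j - i)) = j + d := by omega
    rw [← h1, h3, h2]
  -- the minimal period p of F
  have hPex : ∃ n, 0 < n ∧ ∀ d, d + n < f → F d = F (d + n) :=
    ⟨f, hf, fun d hd => absurd hd (by omega)⟩
  set p := Nat.find hPex with hpdef
  obtain ⟨hppos, hpper⟩ := Nat.find_spec hPex
  have hpmin : ∀ p', 0 < p' → (∀ d, d + p' < f → F d = F (d + p')) → p ≤ p' :=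
    fun p' h1 h2 => Nat.find_min' hPex ⟨h1, h2⟩
  have hp1 : p ≤ m - i1 := hpmin _ (by omega) (pairP i1 hi1S m hmS (le_of_lt hi1m))
  have hp2 : p ≤ L - m := hpmin _ (by omega) (pairP m hmS L hLS (le_of_lt hmL))
  have h2p : 2 * p ≤ L - i1 := by omega
  -- periods of the window W = G[i1, L+f)
  have hPWQ : ∀ x, x + (L - i1) < (L - i1) + f →
      G (i1 + x) = G (i1 + (x + (L - i1))) := by
    intro x hx
    have hx' : x < f := by omega
    have h1 := occi1 x hx'
    have h2 := occL x hx'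
    have h3 : i1 + (x + (L - i1)) = L + x := by omega
    rw [h1, h3, h2]
  have hPW : ∀ j ∈ S, ∀ x, x + (j - i1) < (L - i1) + f →
      G (i1 + x) = G (i1 + (x + (j - i1))) := by
    intro j hj x hx
    obtain ⟨hjg, occj⟩ := (hmem j).mp hj
    have hij : i1 ≤ j := S.min'_le j hj
    have hjL : j ≤ L := S.le_max' j hj
    have base : ∀ y, y < f → G (i1 + y) = G (i1 + (y + (j - i1))) := by
      intro y hy
      have h1 := occi1 y hy
      have h2 := occj y hy
      have h3 : i1 + (y + (j - i1)) = j + y := by omega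
      rw [h1, h3, h2]
    rcases lt_or_ge x f with hxf | hxf
    · exact base x hxf
    · set y := x - (L - i1) with hydef
      have hyf : y + (j - i1) < f := by omega
      have e1 : G (i1 + y) = G (i1 + (y + (L - i1))) := hPWQ y (by omega)
      have e2 : G (i1 + y) = G (i1 + (y + (j - i1))) := base y (by omega)
      have e3 : G (i1 + (y + (j - i1))) = G (i1 + ((y + (j - i1)) + (L - i1))) :=
        hPWQ (y + (j - i1)) (by omega)
      have c1 : i1 + (y + (L - i1)) = i1 + x := by omega
      have c2 : i1 + ((y + (j - i1)) + (L - i1)) = i1 + (x + (j - i1)) := by omega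
      rw [c1] at e1
      rw [c2] at e3
      rw [← e1, e2, e3]
  -- the minimal window period r
  have hRex : ∃ q, 0 < q ∧ q ≤ L - i1 ∧ ∀ x, x + q < (L - i1) + f →
      G (i1 + x) = G (i1 + (x + q)) := ⟨L - i1, by omega, le_rfl, hPWQ⟩
  set r := Nat.find hRex with hrdef
  obtain ⟨hrpos, hrQ, hrPW⟩ := Nat.find_spec hRex
  have hrdvd : ∀ j ∈ S, r ∣ (j - i1) := by
    intro j hj
    rcases eq_or_ne j i1 with h | h
    · simp [h]
    have hij : i1 ≤ j := S.min'_le j hj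
    have hjL : j ≤ L := S.le_max' j hj
    have hq : 0 < j - i1 := by omega
    have hg := fw_gcd (fun x => G (i1 + x)) ((L - i1) + f) (r + (j - i1)) r (j - i1)
      le_rfl (by omega) hrPW (hPW j hj)
    have hgcdpos : 0 < Nat.gcd r (j - i1) := Nat.gcd_pos_of_pos_left _ hrpos
    have hgcdle : Nat.gcd r (j - i1) ≤ L - i1 :=
      le_trans (Nat.le_of_dvd hq (Nat.gcd_dvd_right _ _)) (by omega)
    have hle1 : r ≤ Nat.gcd r (j - i1) := Nat.find_min' hRex ⟨hgcdpos, hgcdle, hg⟩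
    have heq : Nat.gcd r (j - i1) = r :=
      le_antisymm (Nat.le_of_dvd hrpos (Nat.gcd_dvd_left _ _)) hle1
    exact heq ▸ Nat.gcd_dvd_right r (j - i1)
  -- r is a period of F, hence p ≤ r
  have hrF : ∀ d, d + r < f → F d = F (d + r) := by
    intro d hd
    have h1 := hrPW d (by omega)
    rw [occi1 d (by omega), occi1 (d + r) hd] at h1
    exact h1
  have hpr : p ≤ r := hpmin r hrpos hrF
  -- 2r ≤ Q
  have hrm : r ∣ (m - i1) := hrdvd m hmS
  have hrL : r ∣ (L - i1) := hrdvd L hLS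
  have hrm' : r ≤ m - i1 := Nat.le_of_dvd (by omega) hrm
  have hrLm : r ∣ (L - m) := by
    have h : L - m = (L - i1) - (m - i1) := by omega
    rw [h]; exact Nat.dvd_sub hrL hrm
  have hrLm' : r ≤ L - m := Nat.le_of_dvd (by omega) hrLm
  have h2r : 2 * r ≤ L - i1 := by omega
  -- p divides r (Fine–Wilf on F, since p + r ≤ 2r ≤ Q ≤ f)
  have hpdvdr : p ∣ r := by
    have hg := fw_gcd F f (p + r) p r le_rfl (by omega) hpper hrF
    have hgcdpos : 0 < Nat.gcd p r := Nat.gcd_pos_of_pos_left _ hppos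
    have h1 : p ≤ Nat.gcd p r := hpmin _ hgcdpos hg
    have heq : Nat.gcd p r = p :=
      le_antisymm (Nat.le_of_dvd hppos (Nat.gcd_dvd_left p r)) h1
    exact heq ▸ Nat.gcd_dvd_right p r
  have hpL : p ∣ (L - i1) := dvd_trans hpdvdr hrL
  -- step lemma: shifting an occurrence by p stays an occurrence
  have hstep : ∀ j ∈ S, j + p ≤ L → j + p ∈ S := by
    intro j hj hjp
    obtain ⟨hjg, occj⟩ := (hmem j).mp hj
    have hij : i1 ≤ j := S.min'_le j hj
    have hpLj : p ∣ (L - j) := by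
      have h1 : p ∣ (j - i1) := dvd_trans hpdvdr (hrdvd j hj)
      have h : L - j = (L - i1) - (j - i1) := by omega
      rw [h]; exact Nat.dvd_sub hpL h1
    rw [hmem]
    refine ⟨by omega, ?_⟩
    intro d hd
    rcases lt_or_ge (d + p) f with h1 | h1
    · have h2 := occj (d + p) h1
      have h3 : j + (d + p) = j + p + d := by omega
      rw [h3] at h2
      rw [h2]
      exact (hpper d h1).symm
    · have he0 : L + (j + p + d - L) = j + p + d := by omega
      have hef : j + p + d - L < f := by omega
      have h2 := occL (j + p + d - L) hef
      rw [he0] at h2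
      rw [h2]
      have hdvd : p ∣ (d - (j + p + d - L)) := by
        have h : d - (j + p + d - L) = (L - j) - p := by omega
        rw [h]; exact Nat.dvd_sub hpLj dvd_rfl
      exact chain_dvd F f p hpper _ d (by omega) hd hdvd
  -- all positions i1 + t*p up to L are occurrences
  have hup : ∀ t, t * p ≤ L - i1 → i1 + t * p ∈ S := by
    intro t
    induction t with
    | zero => intro _; simpa using hi1S
    | succ n ih =>
      intro ht
      have hsm : (n+1) * p = n * p + p := by ring
      have h1 : n * p ≤ L - i1 := by omega
      have h2 := hstep (i1 + n * p) (ih h1) (by omega)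
      have h3 : i1 + n * p + p = i1 + (n+1) * p := by omega
      rw [h3] at h2
      exact h2
  set k := (L - i1) / p with hkdef
  have hkp : k * p = L - i1 := Nat.div_mul_cancel hpL
  have hSeq : S = (Finset.range (k+1)).image (fun t => i1 + t * p) := by
    apply Finset.ext
    intro j
    simp only [Finset.mem_image, Finset.mem_range]
    constructor
    · intro hj
      have hij : i1 ≤ j := S.min'_le j hj
      have hjL : j ≤ L := S.le_max' j hj
      have hdvd : p ∣ (j - i1) := dvd_trans hpdvdr (hrdvd j hj)
      refine ⟨(j - i1) / p, ?_, ?_⟩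
      · have h1 : (j - i1) / p ≤ (L - i1) / p := Nat.div_le_div_right (by omega)
        omega
      · have h2 : (j - i1) / p * p = j - i1 := Nat.div_mul_cancel hdvd
        omega
    · rintro ⟨t, ht, rfl⟩
      apply hup
      have h1 : t * p ≤ k * p := Nat.mul_le_mul_right _ (by omega)
      omega
  have hinj : Function.Injective (fun t : ℕ => i1 + t * p) := by
    intro a b hab
    simp only at hab
    exact Nat.eq_of_mul_eq_mul_right hppos (Nat.add_left_cancel hab)
  have hcard : S.card = k + 1 := by
    rw [hSeq, Finset.card_image_of_injective _ hinj, Finset.card_range]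
  refine ⟨p, ⟨hppos, hpper, hpmin⟩, i1, ?_⟩
  rw [hcard]
  exact hSeq
end

section
/- Let U, V be binary strings each with at most c ones, m a window length, and q a positive integer. Then the set A = { i : ∃ j, ||U_(i)|| + ||V_(j)|| ≤ k and j ≡ i (mod q) } (where X_(i) denotes the length-m factor of X starting at i and ||·|| the number of ones) is a union of O(c²) interval chains with difference q; specifically, at most 3(2c+1)² such chains. -/
/-- The interval chain `Chain_q(I,a) = I ∪ (I⊕q) ∪ ⋯ ∪ (I⊕aq)` for `I = [l..r]`. -/
def chainN (q l r a : ℕ) : Finset ℕ :=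
  (Finset.range (a+1)).biUnion fun t => Finset.Icc (l + t*q) (r + t*q)

lemma mem_chainN {q l r a z : ℕ} :
    z ∈ chainN q l r a ↔ ∃ t, t ≤ a ∧ l + t * q ≤ z ∧ z ≤ r + t * q := by
  simp [chainN, Nat.lt_succ_iff, and_assoc]

lemma chainN_empty (q : ℕ) : chainN q 1 0 0 = ∅ := by
  ext z
  rw [mem_chainN]
  simp only [Finset.notMem_empty, iff_false]
  rintro ⟨t, ht, h1, h2⟩
  omega

lemma chainN_zero (q l r : ℕ) : chainN q l r 0 = Finset.Icc l r := by
  ext z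
  rw [mem_chainN, Finset.mem_Icc]
  constructor
  · rintro ⟨t, ht, h1, h2⟩
    obtain rfl : t = 0 := Nat.le_zero.mp ht
    omega
  · rintro ⟨h1, h2⟩
    exact ⟨0, le_refl _, by omega, by omega⟩

lemma exists_mod_iff {q : ℕ} (hq : 0 < q) (x1 x2 z : ℕ) :
    (∃ x, x1 ≤ x ∧ x ≤ x2 ∧ x % q = z % q) ↔
      ∃ t, x1 + t * q ≤ z + x2 * q ∧ z + x2 * q ≤ x2 + t * q := by
  constructor
  · rintro ⟨x, h1, h2, h3⟩
    have hx : x ≤ z + x2 * q :=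
      le_trans (h2.trans (Nat.le_mul_of_pos_right x2 hq)) (Nat.le_add_left _ _)
    have hm : (z + x2 * q) % q = x % q := by
      rw [Nat.add_mul_mod_self_right, h3]
    obtain ⟨t, ht⟩ : q ∣ (z + x2 * q - x) :=
      Nat.dvd_of_mod_eq_zero (Nat.sub_mod_eq_zero_of_mod_eq hm)
    have hqt : q * t = t * q := Nat.mul_comm q t
    exact ⟨t, by omega, by omega⟩
  · rintro ⟨t, h1, h2⟩
    refine ⟨z + x2 * q - t * q, by omega, by omega, ?_⟩
    have he : z + x2 * q - t * q + t * q = z + x2 * q := by omega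
    calc (z + x2 * q - t * q) % q
        = (z + x2 * q - t * q + t * q) % q := (Nat.add_mul_mod_self_right _ _ _).symm
      _ = (z + x2 * q) % q := by rw [he]
      _ = z % q := Nat.add_mul_mod_self_right _ _ _

open Classical in
/-- Core lemma: the aligned set over a pair of intervals is a union of 3 chains. -/
lemma core (q z1 z2 x1 x2 : ℕ) (hq : 0 < q) :
    ∃ l1 r1 a1 l2 r2 a2 l3 r3 a3 : ℕ,
      (Finset.Icc z1 z2).filter (fun z => ∃ x, x1 ≤ x ∧ x ≤ x2 ∧ x % q = z % q) =
        chainN q l1 r1 a1 ∪ chainN q l2 r2 a2 ∪ chainN q l3 r3 a3 := by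
  by_cases hz : z1 ≤ z2
  swap
  · refine ⟨1, 0, 0, 1, 0, 0, 1, 0, 0, ?_⟩
    rw [Finset.Icc_eq_empty (by omega), Finset.filter_empty, chainN_empty,
      Finset.union_empty, Finset.union_empty]
  by_cases hx : x1 ≤ x2
  swap
  · refine ⟨1, 0, 0, 1, 0, 0, 1, 0, 0, ?_⟩
    rw [chainN_empty, Finset.union_empty, Finset.union_empty]
    rw [Finset.filter_eq_empty_iff]
    rintro z - ⟨x, h1, h2, -⟩
    omega
  by_cases hbig : x1 + q ≤ x2 + 1
  · -- all residues occur: the set is the whole interval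
    refine ⟨z1, z2, 0, 1, 0, 0, 1, 0, 0, ?_⟩
    rw [chainN_zero, chainN_empty, Finset.union_empty, Finset.union_empty]
    apply Finset.filter_eq_self.mpr
    intro z hz'
    rw [exists_mod_iff hq]
    have hwx : x1 ≤ z + x2 * q := by
      have : x2 ≤ x2 * q := Nat.le_mul_of_pos_right x2 hq
      omega
    have hd := Nat.div_add_mod (z + x2 * q - x1) q
    have hm := Nat.mod_lt (z + x2 * q - x1) hq
    have hqt : q * ((z + x2 * q - x1) / q) = ((z + x2 * q - x1) / q) * q :=
      Nat.mul_comm _ _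
    exact ⟨(z + x2 * q - x1) / q, by omega, by omega⟩
  · -- blocks are separated
    have hCx : x1 ≤ z1 + x2 * q := by
      have : x2 ≤ x2 * q := Nat.le_mul_of_pos_right x2 hq
      omega
    have hd1 := Nat.div_add_mod (z1 + x2 * q - x1) q
    have hm1 := Nat.mod_lt (z1 + x2 * q - x1) hq
    have hd2 := Nat.div_add_mod (z2 + x2 * q - x1) q
    have hm2 := Nat.mod_lt (z2 + x2 * q - x1) hq
    set C := x2 * q with hC
    set t1 := (z1 + C - x1) / q with ht1
    set t2 := (z2 + C - x1) / q with ht2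
    have e1 : q * t1 = t1 * q := Nat.mul_comm _ _
    have e2 : q * t2 = t2 * q := Nat.mul_comm _ _
    have b1 : x1 + t1 * q ≤ z1 + C ∧ z1 + C < x1 + t1 * q + q := by omega
    have b2 : x1 + t2 * q ≤ z2 + C ∧ z2 + C < x1 + t2 * q + q := by omega
    have mul_le : ∀ a b : ℕ, a ≤ b → a * q ≤ b * q := fun a b h => Nat.mul_le_mul_right q h
    have ht12 : t1 ≤ t2 := by
      by_contra hcon
      push_neg at hcon
      have h := mul_le (t2 + 1) t1 (by omega)
      have hr : (t2 + 1) * q = t2 * q + q := by ring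
      omega
    have hCle1 : C ≤ x1 + t1 * q + q := by omega
    refine ⟨if z1 + C ≤ x2 + t1 * q then z1 else 1,
            if z1 + C ≤ x2 + t1 * q then min z2 (x2 + t1 * q - C) else 0, 0,
            if t1 + 2 ≤ t2 then x1 + t1 * q + q - C else 1,
            if t1 + 2 ≤ t2 then x2 + t1 * q + q - C else 0,
            t2 - t1 - 2,
            if t1 + 1 ≤ t2 then x1 + t2 * q - C else 1,
            if t1 + 1 ≤ t2 then min z2 (x2 + t2 * q - C) else 0, 0, ?_⟩
    have mem2 : ∀ z, z ∈ chainN q (if t1 + 2 ≤ t2 then x1 + t1 * q + q - C else 1)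
        (if t1 + 2 ≤ t2 then x2 + t1 * q + q - C else 0) (t2 - t1 - 2) ↔
        (∃ t, t1 < t ∧ t < t2 ∧ x1 + t * q ≤ z + C ∧ z + C ≤ x2 + t * q) := by
      intro z
      rw [mem_chainN]
      split_ifs with hP
      · constructor
        · rintro ⟨s, hs, hs1, hs2⟩
          refine ⟨t1 + 1 + s, by omega, by omega, ?_, ?_⟩ <;>
          · have hr : (t1 + 1 + s) * q = t1 * q + q + s * q := by ring
            omega
        · rintro ⟨t, htl, htr, h1, h2⟩
          obtain ⟨s, rfl⟩ : ∃ s, t = t1 + 1 + s := ⟨t - t1 - 1, by omega⟩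
          have hr : (t1 + 1 + s) * q = t1 * q + q + s * q := by ring
          exact ⟨s, by omega, by omega, by omega⟩
      · constructor
        · rintro ⟨s, hs, hs1, hs2⟩
          omega
        · rintro ⟨t, htl, htr, h1, h2⟩
          omega
    ext z
    rw [Finset.mem_filter, Finset.mem_Icc, exists_mod_iff hq, Finset.mem_union,
      Finset.mem_union, mem2, chainN_zero, chainN_zero, Finset.mem_Icc, Finset.mem_Icc]
    constructor
    · rintro ⟨⟨hz1, hz2⟩, t, h1, h2⟩
      have htt2 : t ≤ t2 := by
        by_contra hcon
        push_neg at hcon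
        have h := mul_le (t2 + 1) t (by omega)
        have hr : (t2 + 1) * q = t2 * q + q := by ring
        omega
      have htt1 : t1 ≤ t := by
        by_contra hcon
        push_neg at hcon
        have h := mul_le (t + 1) t1 (by omega)
        have hr : (t + 1) * q = t * q + q := by ring
        omega
      rcases Nat.eq_or_lt_of_le htt1 with heq | ht1t
      · rw [← heq] at h1 h2
        left; left
        rw [if_pos (show z1 + C ≤ x2 + t1 * q by omega),
          if_pos (show z1 + C ≤ x2 + t1 * q by omega)]
        omega
      · rcases Nat.eq_or_lt_of_le htt2 with heq | htt2'
        · rw [heq] at h1 h2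
          right
          rw [if_pos (show t1 + 1 ≤ t2 by omega), if_pos (show t1 + 1 ≤ t2 by omega)]
          have h := mul_le (t1 + 1) t2 (by omega)
          have hr : (t1 + 1) * q = t1 * q + q := by ring
          omega
        · left; right
          exact ⟨t, by omega, by omega, h1, h2⟩
    · rintro ((h | h) | h)
      · split_ifs at h with hP
        · exact ⟨⟨by omega, by omega⟩, t1, by omega, by omega⟩
        · omega
      · obtain ⟨t, htl, htr, h1, h2⟩ := h
        have ha := mul_le (t1 + 1) t (by omega)
        have hb := mul_le (t + 1) t2 (by omega)
        have ea : (t1 + 1) * q = t1 * q + q := by ring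
        have eb : (t + 1) * q = t * q + q := by ring
        exact ⟨⟨by omega, by omega⟩, t, by omega, by omega⟩
      · split_ifs at h with hP
        · have ha := mul_le (t1 + 1) t2 (by omega)
          have ea : (t1 + 1) * q = t1 * q + q := by ring
          exact ⟨⟨by omega, by omega⟩, t2, by omega, by omega⟩
        · omega

/-- A finset of naturals closed under betweenness is an interval. -/
lemma interval_of (S : Finset ℕ)
    (h : ∀ a ∈ S, ∀ b ∈ S, ∀ x, a ≤ x → x ≤ b → x ∈ S) :
    S = Finset.Icc (if hS : S.Nonempty then S.min' hS else 1)
      (if hS : S.Nonempty then S.max' hS else 0) := by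
  split_ifs with hS
  · ext x
    rw [Finset.mem_Icc]
    constructor
    · intro hx
      exact ⟨S.min'_le x hx, S.le_max' x hx⟩
    · rintro ⟨h1, h2⟩
      exact h _ (S.min'_mem hS) _ (S.max'_mem hS) x h1 h2
  · rw [Finset.not_nonempty_iff_eq_empty.mp hS, Finset.Icc_eq_empty (by omega)]

/-- Window sums are constant on fibers of the breakpoint-counting function. -/
lemma window_const (I : Finset ℕ) (m : ℕ) (hm : 0 < m) (D : Finset ℕ)
    (hD : D = insert 0 ((I.image (fun y => y + 1)) ∪ (I.image (fun y => y + 1 - m))))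
    {i i' : ℕ} (hle : i ≤ i')
    (h : ((D.filter (· ≤ i)).card) = ((D.filter (· ≤ i')).card)) :
    (I.filter (fun y => i ≤ y ∧ y ≤ i + m - 1)).card =
      (I.filter (fun y => i' ≤ y ∧ y ≤ i' + m - 1)).card := by
  classical
  have hsub : D.filter (· ≤ i) ⊆ D.filter (· ≤ i') :=
    Finset.monotone_filter_right D (fun d _ hd => le_trans hd hle)
  have heq : D.filter (· ≤ i) = D.filter (· ≤ i') :=
    Finset.eq_of_subset_of_card_le hsub h.ge
  have hiff : ∀ d, d ∈ D → (d ≤ i ↔ d ≤ i') := by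
    intro d hd
    constructor
    · intro h1; exact h1.trans hle
    · intro h1
      have hmem : d ∈ D.filter (· ≤ i') := Finset.mem_filter.mpr ⟨hd, h1⟩
      rw [← heq] at hmem
      exact (Finset.mem_filter.mp hmem).2
  congr 1
  apply Finset.filter_congr
  intro y hy
  have h1 := hiff (y + 1) (by
    rw [hD]
    exact Finset.mem_insert_of_mem (Finset.mem_union_left _ (Finset.mem_image_of_mem _ hy)))
  have h2 := hiff (y + 1 - m) (by
    rw [hD]
    exact Finset.mem_insert_of_mem (Finset.mem_union_right _ (Finset.mem_image_of_mem _ hy)))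
  omega

/-- **Aligned-Light-Sum.** Let `U`, `V` be binary strings (of lengths `nU`, `nV`, given by
their sets `IU`, `IV` of 1-positions, each of size at most `c`), `m ≤ nU, nV` a window
length and `q > 0`. Then
`A = { i : ∃ j, ‖U_(i)‖ + ‖V_(j)‖ ≤ k and j ≡ i (mod q) }` (over valid window positions
`i ∈ [0..nU-m]`, `j ∈ [0..nV-m]`, where `‖X_(i)‖` counts ones in the length-`m` window at
`i`) is a union of at most `3(2c+1)²` interval chains with difference `q`. -/
theorem aligned_light_sum_chains (IU IV : Finset ℕ) (nU nV m q k c : ℕ)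
    (hq : 0 < q) (hm : 0 < m)
    (hIU : ∀ i ∈ IU, i < nU) (hIV : ∀ i ∈ IV, i < nV)
    (hcU : IU.card ≤ c) (hcV : IV.card ≤ c)
    (hmU : m ≤ nU) (hmV : m ≤ nV) :
    ∃ l r a : Fin (3*(2*c+1)^2) → ℕ,
      (Finset.range (nU - m + 1)).filter (fun i => ∃ j ≤ nV - m,
          (IU.filter (fun y => i ≤ y ∧ y ≤ i + m - 1)).card +
            (IV.filter (fun y => j ≤ y ∧ y ≤ j + m - 1)).card ≤ k ∧
          j % q = i % q) =
        Finset.univ.biUnion (fun t => chainN q (l t) (r t) (a t)) := by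
  classical
  set DU := insert 0 ((IU.image (fun y => y + 1)) ∪ (IU.image (fun y => y + 1 - m))) with hDU
  set DV := insert 0 ((IV.image (fun y => y + 1)) ∪ (IV.image (fun y => y + 1 - m))) with hDV
  have hDUcard : DU.card ≤ 2 * c + 1 := by
    have h1 := Finset.card_insert_le 0 ((IU.image (fun y => y + 1)) ∪ (IU.image (fun y => y + 1 - m)))
    have h2 := Finset.card_union_le (IU.image (fun y => y + 1)) (IU.image (fun y => y + 1 - m))
    have h3 := Finset.card_image_le (s := IU) (f := fun y => y + 1)
    have h4 := Finset.card_image_le (s := IU) (f := fun y => y + 1 - m)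
    rw [hDU]
    omega
  have hDVcard : DV.card ≤ 2 * c + 1 := by
    have h1 := Finset.card_insert_le 0 ((IV.image (fun y => y + 1)) ∪ (IV.image (fun y => y + 1 - m)))
    have h2 := Finset.card_union_le (IV.image (fun y => y + 1)) (IV.image (fun y => y + 1 - m))
    have h3 := Finset.card_image_le (s := IV) (f := fun y => y + 1)
    have h4 := Finset.card_image_le (s := IV) (f := fun y => y + 1 - m)
    rw [hDV]
    omega
  have hwconstU : ∀ i i', ((DU.filter (· ≤ i)).card) = ((DU.filter (· ≤ i')).card) →
      (IU.filter (fun y => i ≤ y ∧ y ≤ i + m - 1)).card =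
        (IU.filter (fun y => i' ≤ y ∧ y ≤ i' + m - 1)).card := by
    intro i i' hh
    rcases le_total i i' with hle | hle
    · exact window_const IU m hm DU hDU hle hh
    · exact (window_const IU m hm DU hDU hle hh.symm).symm
  have hwconstV : ∀ i i', ((DV.filter (· ≤ i)).card) = ((DV.filter (· ≤ i')).card) →
      (IV.filter (fun y => i ≤ y ∧ y ≤ i + m - 1)).card =
        (IV.filter (fun y => i' ≤ y ∧ y ≤ i' + m - 1)).card := by
    intro i i' hh
    rcases le_total i i' with hle | hle
    · exact window_const IV m hm DV hDV hle hh
    · exact (window_const IV m hm DV hDV hle hh.symm).symm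
  have hfmonoU : ∀ i i' : ℕ, i ≤ i' → ((DU.filter (· ≤ i)).card) ≤ ((DU.filter (· ≤ i')).card) :=
    fun i i' h => Finset.card_le_card (Finset.monotone_filter_right DU (fun d _ hd => le_trans hd h))
  have hfmonoV : ∀ i i' : ℕ, i ≤ i' → ((DV.filter (· ≤ i)).card) ≤ ((DV.filter (· ≤ i')).card) :=
    fun i i' h => Finset.card_le_card (Finset.monotone_filter_right DV (fun d _ hd => le_trans hd h))
  have hfposU : ∀ i : ℕ, 1 ≤ ((DU.filter (· ≤ i)).card) := by
    intro i
    apply Finset.card_pos.mpr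
    exact ⟨0, Finset.mem_filter.mpr ⟨by rw [hDU]; exact Finset.mem_insert_self _ _, Nat.zero_le i⟩⟩
  have hfposV : ∀ i : ℕ, 1 ≤ ((DV.filter (· ≤ i)).card) := by
    intro i
    apply Finset.card_pos.mpr
    exact ⟨0, Finset.mem_filter.mpr ⟨by rw [hDV]; exact Finset.mem_insert_self _ _, Nat.zero_le i⟩⟩
  have hfleU : ∀ i : ℕ, ((DU.filter (· ≤ i)).card) ≤ 2 * c + 1 :=
    fun i => le_trans (Finset.card_le_card (Finset.filter_subset _ _)) hDUcard
  have hfleV : ∀ i : ℕ, ((DV.filter (· ≤ i)).card) ≤ 2 * c + 1 :=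
    fun i => le_trans (Finset.card_le_card (Finset.filter_subset _ _)) hDVcard
  set ZS : ℕ → Finset ℕ := fun s => (Finset.range (nU - m + 1)).filter
      (fun i => ((DU.filter (· ≤ i)).card) = s + 1) with hZS
  set XS : ℕ → Finset ℕ := fun u => (Finset.range (nV - m + 1)).filter
      (fun j => ((DV.filter (· ≤ j)).card) = u + 1) with hXS
  have hZmem : ∀ s i, i ∈ ZS s ↔ (i < nU - m + 1 ∧ ((DU.filter (· ≤ i)).card) = s + 1) := by
    intro s i
    rw [hZS]
    simp [Finset.mem_filter]
  have hXmem : ∀ u j, j ∈ XS u ↔ (j < nV - m + 1 ∧ ((DV.filter (· ≤ j)).card) = u + 1) := by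
    intro u j
    rw [hXS]
    simp [Finset.mem_filter]
  have hZbetween : ∀ s, ∀ a ∈ ZS s, ∀ b ∈ ZS s, ∀ x, a ≤ x → x ≤ b → x ∈ ZS s := by
    intro s a ha b hb x hax hxb
    rw [hZmem] at ha hb ⊢
    have h1 := hfmonoU a x hax
    have h2 := hfmonoU x b hxb
    exact ⟨by omega, by omega⟩
  have hXbetween : ∀ u, ∀ a ∈ XS u, ∀ b ∈ XS u, ∀ x, a ≤ x → x ≤ b → x ∈ XS u := by
    intro u a ha b hb x hax hxb
    rw [hXmem] at ha hb ⊢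
    have h1 := hfmonoV a x hax
    have h2 := hfmonoV x b hxb
    exact ⟨by omega, by omega⟩
  set zl : ℕ → ℕ := fun s => if hS : (ZS s).Nonempty then (ZS s).min' hS else 1 with hzl
  set zr : ℕ → ℕ := fun s => if hS : (ZS s).Nonempty then (ZS s).max' hS else 0 with hzr
  set xl : ℕ → ℕ := fun u => if hS : (XS u).Nonempty then (XS u).min' hS else 1 with hxl
  set xr : ℕ → ℕ := fun u => if hS : (XS u).Nonempty then (XS u).max' hS else 0 with hxr
  have hZIcc : ∀ s, ZS s = Finset.Icc (zl s) (zr s) := fun s =>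
    interval_of (ZS s) (hZbetween s)
  have hXIcc : ∀ u, XS u = Finset.Icc (xl u) (xr u) := fun u =>
    interval_of (XS u) (hXbetween u)
  have hzlmem : ∀ s, (ZS s).Nonempty → zl s ∈ ZS s := by
    intro s hS
    show (if hS' : (ZS s).Nonempty then (ZS s).min' hS' else 1) ∈ ZS s
    rw [dif_pos hS]
    exact (ZS s).min'_mem hS
  have hxlmem : ∀ u, (XS u).Nonempty → xl u ∈ XS u := by
    intro u hS
    show (if hS' : (XS u).Nonempty then (XS u).min' hS' else 1) ∈ XS u
    rw [dif_pos hS]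
    exact (XS u).min'_mem hS
  set cond : ℕ → ℕ → Prop := fun s u => (ZS s).Nonempty ∧ (XS u).Nonempty ∧
      (IU.filter (fun y => zl s ≤ y ∧ y ≤ zl s + m - 1)).card +
        (IV.filter (fun y => xl u ≤ y ∧ y ≤ xl u + m - 1)).card ≤ k with hcond
  set zl' : ℕ → ℕ → ℕ := fun s u => if cond s u then zl s else 1 with hzl'
  set zr' : ℕ → ℕ → ℕ := fun s u => if cond s u then zr s else 0 with hzr'
  set xl' : ℕ → ℕ → ℕ := fun s u => if cond s u then xl u else 1 with hxl'
  set xr' : ℕ → ℕ → ℕ := fun s u => if cond s u then xr u else 0 with hxr'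
  have key : ∀ s u : ℕ, ∃ l1 r1 a1 l2 r2 a2 l3 r3 a3 : ℕ,
      (Finset.Icc (zl' s u) (zr' s u)).filter
          (fun z => ∃ x, xl' s u ≤ x ∧ x ≤ xr' s u ∧ x % q = z % q) =
        chainN q l1 r1 a1 ∪ chainN q l2 r2 a2 ∪ chainN q l3 r3 a3 :=
    fun s u => core q (zl' s u) (zr' s u) (xl' s u) (xr' s u) hq
  choose L1 R1 A1 L2 R2 A2 L3 R3 A3 hCH using key
  -- forward: each witness lands in some piece
  have stepA : ∀ i, i < nU - m + 1 → ∀ j, j ≤ nV - m →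
      (IU.filter (fun y => i ≤ y ∧ y ≤ i + m - 1)).card +
        (IV.filter (fun y => j ≤ y ∧ y ≤ j + m - 1)).card ≤ k → j % q = i % q →
      ∃ s u, s < 2*c+1 ∧ u < 2*c+1 ∧
        i ∈ (Finset.Icc (zl' s u) (zr' s u)).filter
          (fun z => ∃ x, xl' s u ≤ x ∧ x ≤ xr' s u ∧ x % q = z % q) := by
    intro i hi j hj hk hmod
    refine ⟨(DU.filter (· ≤ i)).card - 1, (DV.filter (· ≤ j)).card - 1, ?_, ?_, ?_⟩
    · have := hfleU i; have := hfposU i; omega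
    · have := hfleV j; have := hfposV j; omega
    · set s := (DU.filter (· ≤ i)).card - 1 with hs
      set u := (DV.filter (· ≤ j)).card - 1 with hu
      have hiZ : i ∈ ZS s := (hZmem s i).mpr ⟨hi, by have := hfposU i; omega⟩
      have hjX : j ∈ XS u := (hXmem u j).mpr ⟨by omega, by have := hfposV j; omega⟩
      have hne : (ZS s).Nonempty := ⟨i, hiZ⟩
      have hne' : (XS u).Nonempty := ⟨j, hjX⟩
      have hzlZ := hzlmem s hne
      have hxlX := hxlmem u hne'
      have hcnd : cond s u := by
        refine ⟨hne, hne', ?_⟩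
        have h1 : (IU.filter (fun y => zl s ≤ y ∧ y ≤ zl s + m - 1)).card =
            (IU.filter (fun y => i ≤ y ∧ y ≤ i + m - 1)).card := by
          apply hwconstU
          have ha := (hZmem s (zl s)).mp hzlZ
          have hb := (hZmem s i).mp hiZ
          omega
        have h2 : (IV.filter (fun y => xl u ≤ y ∧ y ≤ xl u + m - 1)).card =
            (IV.filter (fun y => j ≤ y ∧ y ≤ j + m - 1)).card := by
          apply hwconstV
          have ha := (hXmem u (xl u)).mp hxlX
          have hb := (hXmem u j).mp hjX
          omega
        omega
      have ezl : zl' s u = zl s := by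
        show (if cond s u then zl s else 1) = zl s
        rw [if_pos hcnd]
      have ezr : zr' s u = zr s := by
        show (if cond s u then zr s else 0) = zr s
        rw [if_pos hcnd]
      have exl : xl' s u = xl u := by
        show (if cond s u then xl u else 1) = xl u
        rw [if_pos hcnd]
      have exr : xr' s u = xr u := by
        show (if cond s u then xr u else 0) = xr u
        rw [if_pos hcnd]
      rw [Finset.mem_filter, ezl, ezr, exl, exr]
      constructor
      · rw [← hZIcc s]
        exact hiZ
      · refine ⟨j, ?_, ?_, hmod⟩ <;>
        · have := (hXIcc u) ▸ hjX
          rw [Finset.mem_Icc] at this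
          omega
  -- backward: each piece member satisfies the original property
  have stepB : ∀ s u i,
      i ∈ (Finset.Icc (zl' s u) (zr' s u)).filter
          (fun z => ∃ x, xl' s u ≤ x ∧ x ≤ xr' s u ∧ x % q = z % q) →
      (i < nU - m + 1 ∧ ∃ j, j ≤ nV - m ∧
        ((IU.filter (fun y => i ≤ y ∧ y ≤ i + m - 1)).card +
          (IV.filter (fun y => j ≤ y ∧ y ≤ j + m - 1)).card ≤ k ∧
        j % q = i % q)) := by
    intro s u i hi
    rw [Finset.mem_filter, Finset.mem_Icc] at hi
    obtain ⟨⟨hi1, hi2⟩, x, hx1, hx2, hx3⟩ := hi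
    by_cases hcnd : cond s u
    swap
    · exfalso
      have e1 : zl' s u = 1 := by
        show (if cond s u then zl s else 1) = 1
        rw [if_neg hcnd]
      have e2 : zr' s u = 0 := by
        show (if cond s u then zr s else 0) = 0
        rw [if_neg hcnd]
      rw [e1] at hi1
      rw [e2] at hi2
      omega
    · have hcc : (ZS s).Nonempty ∧ (XS u).Nonempty ∧
          (IU.filter (fun y => zl s ≤ y ∧ y ≤ zl s + m - 1)).card +
            (IV.filter (fun y => xl u ≤ y ∧ y ≤ xl u + m - 1)).card ≤ k := hcnd
      obtain ⟨hne, hne', hk⟩ := hcc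
      have e1 : zl' s u = zl s := by
        show (if cond s u then zl s else 1) = zl s
        rw [if_pos hcnd]
      have e2 : zr' s u = zr s := by
        show (if cond s u then zr s else 0) = zr s
        rw [if_pos hcnd]
      have e3 : xl' s u = xl u := by
        show (if cond s u then xl u else 1) = xl u
        rw [if_pos hcnd]
      have e4 : xr' s u = xr u := by
        show (if cond s u then xr u else 0) = xr u
        rw [if_pos hcnd]
      rw [e1] at hi1; rw [e2] at hi2; rw [e3] at hx1; rw [e4] at hx2
      have hiZ : i ∈ ZS s := by
        rw [hZIcc s]
        exact Finset.mem_Icc.mpr ⟨hi1, hi2⟩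
      have hxX : x ∈ XS u := by
        rw [hXIcc u]
        exact Finset.mem_Icc.mpr ⟨hx1, hx2⟩
      obtain ⟨hiN, hif⟩ := (hZmem s i).mp hiZ
      obtain ⟨hxN, hxf⟩ := (hXmem u x).mp hxX
      refine ⟨hiN, x, by omega, ?_, hx3⟩
      have h1 : (IU.filter (fun y => i ≤ y ∧ y ≤ i + m - 1)).card =
          (IU.filter (fun y => zl s ≤ y ∧ y ≤ zl s + m - 1)).card := by
        apply hwconstU
        have ha := (hZmem s (zl s)).mp (hzlmem s hne)
        omega
      have h2 : (IV.filter (fun y => x ≤ y ∧ y ≤ x + m - 1)).card =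
          (IV.filter (fun y => xl u ≤ y ∧ y ≤ xl u + m - 1)).card := by
        apply hwconstV
        have ha := (hXmem u (xl u)).mp (hxlmem u hne')
        omega
      omega
  -- package into Fin (3*(2c+1)^2) chains
  set F : ℕ → ℕ → ℕ → ℕ × ℕ × ℕ := fun s u e =>
    if e = 0 then (L1 s u, R1 s u, A1 s u)
    else if e = 1 then (L2 s u, R2 s u, A2 s u)
    else (L3 s u, R3 s u, A3 s u) with hF
  refine ⟨fun t => (F (t.val / (3*(2*c+1))) (t.val % (3*(2*c+1)) / 3) (t.val % 3)).1,
          fun t => (F (t.val / (3*(2*c+1))) (t.val % (3*(2*c+1)) / 3) (t.val % 3)).2.1,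
          fun t => (F (t.val / (3*(2*c+1))) (t.val % (3*(2*c+1)) / 3) (t.val % 3)).2.2, ?_⟩
  ext i
  simp only [Finset.mem_filter, Finset.mem_range, Finset.mem_biUnion, Finset.mem_univ, true_and]
  constructor
  · rintro ⟨hi, j, hj, hk, hmod⟩
    obtain ⟨s, u, hs, hu, hpiece⟩ := stepA i hi j hj hk hmod
    rw [hCH s u, Finset.mem_union, Finset.mem_union] at hpiece
    have henc : ∀ e : ℕ, e < 3 → ∃ t : Fin (3*(2*c+1)^2),
        t.val / (3*(2*c+1)) = s ∧ t.val % (3*(2*c+1)) / 3 = u ∧ t.val % 3 = e := by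
      intro e he
      have hD3 : 0 < 3*(2*c+1) := by omega
      have hb : e + 3*u < 3*(2*c+1) := by omega
      refine ⟨⟨(e + 3*u) + (3*(2*c+1))*s, ?_⟩, ?_, ?_, ?_⟩
      · have hh1 : (3*(2*c+1))*s ≤ (3*(2*c+1))*(2*c) := Nat.mul_le_mul_left _ (by omega)
        have hh2 : 3*(2*c+1)^2 = 3*(2*c+1) + (3*(2*c+1))*(2*c) := by ring
        omega
      · show ((e + 3*u) + (3*(2*c+1))*s) / (3*(2*c+1)) = s
        rw [Nat.add_mul_div_left _ _ hD3, Nat.div_eq_of_lt hb]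
        omega
      · show (((e + 3*u) + (3*(2*c+1))*s) % (3*(2*c+1))) / 3 = u
        rw [Nat.add_mul_mod_self_left, Nat.mod_eq_of_lt hb]
        omega
      · show ((e + 3*u) + (3*(2*c+1))*s) % 3 = e
        have hr : (e + 3*u) + (3*(2*c+1))*s = e + 3*(u + (2*c+1)*s) := by ring
        rw [hr]
        omega
    rcases hpiece with (h | h) | h
    · obtain ⟨t, e1, e2, e3⟩ := henc 0 (by omega)
      refine ⟨t, ?_⟩
      rw [e1, e2, e3]
      simpa [hF] using h
    · obtain ⟨t, e1, e2, e3⟩ := henc 1 (by omega)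
      refine ⟨t, ?_⟩
      rw [e1, e2, e3]
      simpa [hF] using h
    · obtain ⟨t, e1, e2, e3⟩ := henc 2 (by omega)
      refine ⟨t, ?_⟩
      rw [e1, e2, e3]
      simpa [hF] using h
  · rintro ⟨t, ht⟩
    set s := t.val / (3*(2*c+1)) with hsdef
    set u := t.val % (3*(2*c+1)) / 3 with hudef
    set e := t.val % 3 with hedef
    have he3 : e = 0 ∨ e = 1 ∨ e = 2 := by omega
    have hp : i ∈ (Finset.Icc (zl' s u) (zr' s u)).filter
        (fun z => ∃ x, xl' s u ≤ x ∧ x ≤ xr' s u ∧ x % q = z % q) := by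
      rw [hCH s u, Finset.mem_union, Finset.mem_union]
      rcases he3 with h0 | h1 | h2
      · rw [h0] at ht
        left; left
        simpa [hF] using ht
      · rw [h1] at ht
        left; right
        simpa [hF] using ht
      · rw [h2] at ht
        right
        simpa [hF] using ht
    exact stepB s u i hp
end
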